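/- Assume that for every execution k ∈ {1,…,N} and every service j ∈ {1,…,m}, some provider in P_j is active at k. Then g(k) ≥ 1 for all k ∈ {1,…,N}, where g(k) = min over services j of (max over providers i ∈ P_j of avl i k). Consequently the greedy breakpoints defined by l_1 = 1 and l_{h+1} = l_h + g(l_h) form a strictly increasing sequence, the greedy procedure terminates after finitely many steps with some breakpoint count Y, and the greedy breakpoints together with the solutions chosen at each breakpoint form a feasible schedule covering all N executions (each block l_h,…,l_{h+1}−1, and the final block l_Y,…,N, admits a valid solution). -/
import Mathlib


/-- A service composition solution: assigns to each service `j ∈ {1,…,m}` a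
provider `f j` in the set `P j` of providers that can provide service `j`. -/
def IsSolution (m : ℕ) (P : ℕ → Finset ℕ) (f : ℕ → ℕ) : Prop :=
  ∀ j, 1 ≤ j → j ≤ m → f j ∈ P j

/-- The solution `f` is valid on executions `k,…,k+q−1` (with `q ≥ 1` and
`k+q−1 ≤ N`): each assigned provider is active at all these executions. -/
def ValidOn (N m : ℕ) (x : ℕ → ℕ → Bool) (f : ℕ → ℕ) (k q : ℕ) : Prop :=
  1 ≤ q ∧ k + q ≤ N + 1 ∧
    ∀ j, 1 ≤ j → j ≤ m → ∀ t, k ≤ t → t < k + q → x (f j) t = true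

/-- `avl N x i k` : the largest `q ≥ 0` with `k + q − 1 ≤ N` such that provider
`i` is active at all executions `k,…,k+q−1`. -/
def avl (N : ℕ) (x : ℕ → ℕ → Bool) (i k : ℕ) : ℕ :=
  Nat.findGreatest
    (fun q => k + q ≤ N + 1 ∧ ∀ t ∈ Finset.Ico k (k + q), x i t = true)
    (N + 1 - k)

/-- `gfun N m P x k` : the minimum over services `j = 1,…,m` of the maximum
over providers `i ∈ P j` of `avl i k`. -/
noncomputable def gfun (N m : ℕ) (P : ℕ → Finset ℕ) (x : ℕ → ℕ → Bool) (k : ℕ) : ℕ :=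
  sInf {a : ℕ | ∃ j, 1 ≤ j ∧ j ≤ m ∧ a = (P j).sup (fun i => avl N x i k)}

/-- Greedy breakpoints (0-indexed): `greedyL g 0 = 1` is the paper's `l₁`, and
`greedyL g h = l_{h+1} = l_h + g(l_h)`. -/
def greedyL (g : ℕ → ℕ) : ℕ → ℕ
  | 0 => 1
  | h + 1 => greedyL g h + g (greedyL g h)

/-- A feasible schedule with `Y'` solutions: breakpoints
`1 = l' 1 < l' 2 < ⋯ < l' Y' ≤ N` such that each block `l' h,…,l' (h+1) − 1`
admits a valid service composition solution, and some solution is valid on the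
final block `l' Y',…,N`. -/
def FeasibleSchedule (N m : ℕ) (P : ℕ → Finset ℕ) (x : ℕ → ℕ → Bool)
    (Y' : ℕ) (l' : ℕ → ℕ) : Prop :=
  1 ≤ Y' ∧ l' 1 = 1 ∧
  (∀ h, 1 ≤ h → h + 1 ≤ Y' → l' h < l' (h + 1)) ∧
  l' Y' ≤ N ∧
  (∀ h, 1 ≤ h → h + 1 ≤ Y' →
    ∃ f, IsSolution m P f ∧ ValidOn N m x f (l' h) (l' (h + 1) - l' h)) ∧
  (∃ f, IsSolution m P f ∧ ValidOn N m x f (l' Y') (N + 1 - l' Y'))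


theorem avl_pos (N : ℕ) (x : ℕ → ℕ → Bool) (i k : ℕ) (hk : k ≤ N)
    (hx : x i k = true) : 1 ≤ avl N x i k := by
  apply Nat.le_findGreatest (by omega)
  refine ⟨by omega, ?_⟩
  intro t ht
  simp only [Finset.mem_Ico] at ht
  have : t = k := by omega
  simpa [this]

theorem avl_spec (N : ℕ) (x : ℕ → ℕ → Bool) (i k q : ℕ) (hk : k ≤ N)
    (hq : q ≤ avl N x i k) :
    k + q ≤ N + 1 ∧ ∀ t ∈ Finset.Ico k (k + q), x i t = true := by
  classical
  have h0 : (fun q => k + q ≤ N + 1 ∧ ∀ t ∈ Finset.Ico k (k + q), x i t = true) 0 := by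
    refine ⟨by omega, ?_⟩
    intro t ht; simp at ht
  have hspec := Nat.findGreatest_spec (P := fun q => k + q ≤ N + 1 ∧ ∀ t ∈ Finset.Ico k (k + q), x i t = true) (m := 0) (n := N + 1 - k) (by omega) h0
  obtain ⟨h1, h2⟩ := hspec
  have havl : Nat.findGreatest
      (fun q => k + q ≤ N + 1 ∧ ∀ t ∈ Finset.Ico k (k + q), x i t = true)
      (N + 1 - k) = avl N x i k := rfl
  rw [havl] at h1 h2
  refine ⟨by omega, fun t ht => h2 t ?_⟩
  simp only [Finset.mem_Ico] at ht ⊢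
  omega

theorem gfun_le_sup (N m : ℕ) (P : ℕ → Finset ℕ) (x : ℕ → ℕ → Bool) (k j : ℕ)
    (hj1 : 1 ≤ j) (hjm : j ≤ m) :
    gfun N m P x k ≤ (P j).sup (fun i => avl N x i k) :=
  Nat.sInf_le ⟨j, hj1, hjm, rfl⟩

theorem exists_valid (N m : ℕ) (P : ℕ → Finset ℕ) (x : ℕ → ℕ → Bool)
    (hm : 1 ≤ m)
    (hP : ∀ j, 1 ≤ j → j ≤ m → (P j).Nonempty) (k q : ℕ) (hk : k ≤ N)
    (hq1 : 1 ≤ q) (hqg : q ≤ gfun N m P x k) :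
    ∃ f, IsSolution m P f ∧ ValidOn N m x f k q := by
  classical
  have hch : ∀ j, 1 ≤ j → j ≤ m →
      ∃ i ∈ P j, (P j).sup (fun i => avl N x i k) = avl N x i k := by
    intro j h1 h2
    exact Finset.exists_mem_eq_sup (P j) (hP j h1 h2) _
  set f : ℕ → ℕ := fun j =>
    if h : 1 ≤ j ∧ j ≤ m then (hch j h.1 h.2).choose else 0 with hf
  have hmem : ∀ j, 1 ≤ j → j ≤ m → f j ∈ P j := by
    intro j h1 h2
    simp only [hf, dif_pos (And.intro h1 h2)]
    exact (hch j h1 h2).choose_spec.1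
  have hspec : ∀ j, 1 ≤ j → j ≤ m →
      k + q ≤ N + 1 ∧ ∀ t ∈ Finset.Ico k (k + q), x (f j) t = true := by
    intro j h1 h2
    have heq := (hch j h1 h2).choose_spec.2
    have hle : q ≤ avl N x (f j) k := by
      have := gfun_le_sup N m P x k j h1 h2
      simp only [hf, dif_pos (And.intro h1 h2)]
      omega
    exact avl_spec N x (f j) k q hk hle
  refine ⟨f, hmem, hq1, (hspec 1 le_rfl hm).1, ?_⟩
  intro j h1 h2 t ht1 ht2
  exact (hspec j h1 h2).2 t (Finset.mem_Ico.mpr ⟨ht1, ht2⟩)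


/-- If for every execution `k ∈ {1,…,N}` and every service
`j` some provider in `P j` is active at `k`, then `g(k) ≥ 1` for all
`k ∈ {1,…,N}`; consequently the greedy breakpoints `l₁ = 1`,
`l_{h+1} = l_h + g(l_h)` are strictly increasing, the greedy procedure
terminates after finitely many steps with some breakpoint count `Y`
(i.e. `l_Y ≤ N < l_{Y+1}`), and the greedy breakpoints form a feasible
schedule covering all `N` executions. -/
theorem statement1 (N m n : ℕ) (P : ℕ → Finset ℕ) (x : ℕ → ℕ → Bool)
    (hm : 1 ≤ m) (hN : 1 ≤ N)
    (hP : ∀ j, 1 ≤ j → j ≤ m → (P j).Nonempty)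
    (hPn : ∀ j, 1 ≤ j → j ≤ m → ∀ i ∈ P j, 1 ≤ i ∧ i ≤ n)
    (hact : ∀ k, 1 ≤ k → k ≤ N → ∀ j, 1 ≤ j → j ≤ m → ∃ i ∈ P j, x i k = true) :
    (∀ k, 1 ≤ k → k ≤ N → 1 ≤ gfun N m P x k) ∧
    (∀ h, greedyL (gfun N m P x) h ≤ N →
      greedyL (gfun N m P x) h < greedyL (gfun N m P x) (h + 1)) ∧
    (∃ Y, 1 ≤ Y ∧
      greedyL (gfun N m P x) (Y - 1) ≤ N ∧
      N < greedyL (gfun N m P x) Y ∧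
      FeasibleSchedule N m P x Y (fun h => greedyL (gfun N m P x) (h - 1))) := by
  have hg1 : ∀ k, 1 ≤ k → k ≤ N → 1 ≤ gfun N m P x k := by
    intro k hk1 hkN
    have hne : {a : ℕ | ∃ j, 1 ≤ j ∧ j ≤ m ∧
        a = (P j).sup (fun i => avl N x i k)}.Nonempty :=
      ⟨(P 1).sup (fun i => avl N x i k), 1, le_rfl, hm, rfl⟩
    have hmem := Nat.sInf_mem hne
    obtain ⟨j, hj1, hjm, heq⟩ := hmem
    obtain ⟨i, hiP, hix⟩ := hact k hk1 hkN j hj1 hjm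
    have h1 : 1 ≤ avl N x i k := avl_pos N x i k hkN hix
    have h2 : avl N x i k ≤ (P j).sup (fun i => avl N x i k) :=
      Finset.le_sup (f := fun i => avl N x i k) hiP
    unfold gfun
    omega
  set g := gfun N m P x with hgdef
  have hge1 : ∀ h, 1 ≤ greedyL g h := by
    intro h
    induction h with
    | zero => simp [greedyL]
    | succ h ih => simp only [greedyL]; omega
  have hmono : Monotone (greedyL g) := by
    apply monotone_nat_of_le_succ
    intro h
    simp only [greedyL]; omega
  have hstep : ∀ h, greedyL g h ≤ N → greedyL g h < greedyL g (h + 1) := by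
    intro h hh
    have := hg1 (greedyL g h) (hge1 h) hh
    simp only [greedyL]; omega
  refine ⟨hg1, hstep, ?_⟩
  have hex : ∃ h, N < greedyL g h := by
    by_contra hc
    push_neg at hc
    have hgrow : ∀ h, h + 1 ≤ greedyL g h := by
      intro h
      induction h with
      | zero => simp [greedyL]
      | succ h ih =>
        have := hstep h (hc h)
        omega
    have := hgrow N
    have := hc N
    omega
  classical
  set Y := Nat.find hex with hY
  have hYspec : N < greedyL g Y := Nat.find_spec hex
  have hY1 : 1 ≤ Y := by
    rcases Nat.eq_zero_or_pos Y with h | h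
    · exfalso; rw [h] at hYspec; simp [greedyL] at hYspec; omega
    · exact h
  have hYprev : greedyL g (Y - 1) ≤ N := by
    have := Nat.find_min hex (m := Y - 1) (by omega)
    omega
  refine ⟨Y, hY1, hYprev, hYspec, hY1, by simp [greedyL], ?_, hYprev, ?_, ?_⟩
  · -- strict increase
    intro h h1 h2
    simp only
    have hle : greedyL g (h - 1) ≤ greedyL g (Y - 1) := hmono (by omega)
    have := hstep (h - 1) (by omega)
    have : greedyL g (h - 1) < greedyL g (h - 1 + 1) := this
    have heq : h + 1 - 1 = h - 1 + 1 := by omega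
    rw [heq]
    omega
  · -- block solutions
    intro h h1 h2
    simp only
    have hle : greedyL g (h - 1) ≤ greedyL g (Y - 1) := hmono (by omega)
    have hkN : greedyL g (h - 1) ≤ N := by omega
    have heq : h + 1 - 1 = h - 1 + 1 := by omega
    rw [heq]
    have hdiff : greedyL g (h - 1 + 1) - greedyL g (h - 1) = g (greedyL g (h - 1)) := by
      simp only [greedyL]; omega
    rw [hdiff]
    exact exists_valid N m P x hm hP _ _ hkN
      (hg1 _ (hge1 _) hkN) le_rfl
  · -- final block
    simp only
    have hkN : greedyL g (Y - 1) ≤ N := hYprev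
    have hglast : N + 1 - greedyL g (Y - 1) ≤ g (greedyL g (Y - 1)) := by
      have heq : greedyL g Y = greedyL g (Y - 1) + g (greedyL g (Y - 1)) := by
        conv_lhs => rw [show Y = Y - 1 + 1 by omega]
        rfl
      omega
    exact exists_valid N m P x hm hP _ _ hkN (by omega) hglast
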